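/- arXiv:1211.1450 — 5 statements merged into one kernel-verified Lean document; each statement's English description precedes it below -/
import Mathlib

section
/- For n ∈ ℕ, let V_n := {q(z²) + c·z^{2n+1} : q ∈ ℂ[z], deg q ≤ 2n+1, c ∈ ℂ} ⊆ ℂ[z] and W_n := {P ∈ V_n : (z−1)^{2n+2} divides P}. Then the set 𝒩 := {n ∈ ℕ : W_n contains a polynomial P whose coefficient of z^{4n+2} and whose constant coefficient are both nonzero} is infinite. -/
/-!
Let `T` be the Taylor polynomial of degree `2n+1` of `(1 + X) ^ ((2n+1)/2)`, i.e. a truncation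
of the binomial series. The binomial series squares to `(1 + X) ^ (2n+1)`, so
`X ^ (2n+2) ∣ T² - (1 + X) ^ (2n+1)`; substituting `z² - 1` for `X` gives
`(z - 1) ^ (2n+2) ∣ T(z² - 1)² - (z ^ (2n+1))²`. Since `T(z² - 1) + z ^ (2n+1)` takes the
value `2` at `z = 1`, the power `(z - 1) ^ (2n+2)` divides `P = z ^ (2n+1) - T(z² - 1)`, which
lies in `V_n`.
The `z ^ (4n+2)`-coefficient of `P` is `-choose ((2n+1)/2) (2n+1)` and, by the alternating
partial sum of binomial coefficients, its constant term is `choose ((2n-1)/2) (2n+1)`; binomial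
coefficients at half-odd integers never vanish. So every `n` belongs to the set.
-/

open Polynomial

theorem Ring.choose_ne_zero_of_forall_ne_natCast {K : Type*} [Field K] [CharZero K] {a : K}
    (ha : ∀ i : ℕ, a ≠ i) (k : ℕ) : Ring.choose a k ≠ 0 := by
  rw [Ring.choose_eq_smul, ← aeval_eq_smeval, aeval_def, eval₂_eq_eval_map, descPochhammer_map,
    descPochhammer_eval_eq_prod_range]
  exact smul_ne_zero (inv_ne_zero (Nat.cast_ne_zero.2 k.factorial_ne_zero))
    (Finset.prod_ne_zero_iff.2 fun i _ => sub_ne_zero.2 (ha i))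

theorem Ring.sum_range_neg_one_pow_mul_choose {R : Type*} [CommRing R] [BinomialRing R]
    (r : R) (m : ℕ) :
    ∑ k ∈ Finset.range (m + 1), (-1) ^ k * Ring.choose r k =
      (-1) ^ m * Ring.choose (r - 1) m := by
  induction m with
  | zero => simp
  | succ m ih =>
    rw [Finset.sum_range_succ, ih]
    nth_rw 2 [← sub_add_cancel r 1]
    rw [Ring.choose_succ_succ]
    ring

theorem Ring.choose_half_odd_ne_zero {K : Type*} [Field K] [CharZero K] (m : ℤ) (k : ℕ) :
    Ring.choose (((2 * m + 1 : ℤ) : K) / 2) k ≠ 0 := by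
  refine Ring.choose_ne_zero_of_forall_ne_natCast (fun i h => ?_) k
  rw [div_eq_iff two_ne_zero] at h
  have : 2 * m + 1 = (i : ℤ) * 2 := by exact_mod_cast h
  omega

theorem PowerSeries.X_pow_dvd_trunc_mul_trunc_sub {R : Type*} [CommRing R] (n : ℕ)
    (f g : PowerSeries R) :
    Polynomial.X ^ n ∣ trunc n f * trunc n g - trunc n (f * g) := by
  rw [Polynomial.X_pow_dvd_iff]
  intro d hd
  rw [coeff_sub, ← trunc_trunc_mul_trunc, coeff_trunc, if_pos hd, ← Polynomial.coe_mul,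
    Polynomial.coeff_coe, sub_self]

theorem Polynomial.X_sub_C_pow_dvd_sub_of_dvd_sq_sub_sq {K : Type*} [Field K] {a : K} {N : ℕ}
    {f g : K[X]} (h : (X - C a) ^ N ∣ f ^ 2 - g ^ 2) (hfg : f.eval a + g.eval a ≠ 0) :
    (X - C a) ^ N ∣ f - g := by
  have hcop : IsCoprime ((X - C a) ^ N) (f + g) :=
    ((irreducible_X_sub_C a).coprime_iff_not_dvd.2 fun hd =>
      hfg (by simpa using dvd_iff_isRoot.1 hd)).pow_left
  exact hcop.dvd_of_dvd_mul_right (by rwa [mul_comm, ← sq_sub_sq])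

noncomputable def halfPowTaylor (n : ℕ) : ℂ[X] :=
  PowerSeries.trunc (2 * n + 2) (PowerSeries.binomialSeries ℂ (((2 * n + 1 : ℕ) : ℂ) / 2))

theorem coeff_halfPowTaylor {n k : ℕ} (hk : k < 2 * n + 2) :
    (halfPowTaylor n).coeff k = Ring.choose (((2 * n + 1 : ℕ) : ℂ) / 2) k := by
  simp [halfPowTaylor, PowerSeries.coeff_trunc, hk]

theorem natDegree_halfPowTaylor_le (n : ℕ) : (halfPowTaylor n).natDegree ≤ 2 * n + 1 :=
  Nat.lt_succ_iff.1 (PowerSeries.natDegree_trunc_lt _ _)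

theorem coeff_halfPowTaylor_ne_zero {n k : ℕ} (hk : k < 2 * n + 2) :
    (halfPowTaylor n).coeff k ≠ 0 := by
  have hs : ((2 * n + 1 : ℕ) : ℂ) / 2 = ((2 * (n : ℤ) + 1 : ℤ) : ℂ) / 2 := by push_cast; rfl
  rw [coeff_halfPowTaylor hk, hs]
  exact Ring.choose_half_odd_ne_zero n k

theorem X_pow_dvd_halfPowTaylor_sq_sub (n : ℕ) :
    X ^ (2 * n + 2) ∣ halfPowTaylor n ^ 2 - (1 + X) ^ (2 * n + 1) := by
  set B := PowerSeries.binomialSeries ℂ (((2 * n + 1 : ℕ) : ℂ) / 2)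
  have hsq : B * B = ((1 + X) ^ (2 * n + 1) : ℂ[X]) := by
    rw [← PowerSeries.binomialSeries_add, add_halves, PowerSeries.binomialSeries_nat]
    simp
  have hdeg : ((1 + X : ℂ[X]) ^ (2 * n + 1)).natDegree < 2 * n + 2 := by
    rw [add_comm, ← C_1, natDegree_pow, natDegree_X_add_C]
    omega
  have := PowerSeries.X_pow_dvd_trunc_mul_trunc_sub (2 * n + 2) B B
  rwa [hsq, PowerSeries.trunc_coe_eq_self hdeg, ← sq] at this

noncomputable def witnessPoly (n : ℕ) : ℂ[X] :=
  X ^ (2 * n + 1) - (halfPowTaylor n).comp (X ^ 2 - 1)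

theorem X_sub_one_pow_dvd_witnessPoly (n : ℕ) : (X - C 1) ^ (2 * n + 2) ∣ witnessPoly n := by
  have hcomp : (X ^ 2 - 1) ^ (2 * n + 2) ∣
      ((halfPowTaylor n).comp (X ^ 2 - 1)) ^ 2 - (X ^ (2 * n + 1)) ^ 2 := by
    obtain ⟨g, hg⟩ := X_pow_dvd_halfPowTaylor_sq_sub n
    refine ⟨g.comp (X ^ 2 - 1), ?_⟩
    have := congrArg (fun p => p.comp (X ^ 2 - 1 : ℂ[X])) hg
    simp only [sub_comp, pow_comp, add_comp, one_comp, X_comp, mul_comp] at this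
    linear_combination this
  have hroot : (X - C 1) ^ (2 * n + 2) ∣ (X ^ 2 - 1 : ℂ[X]) ^ (2 * n + 2) :=
    pow_dvd_pow_of_dvd ⟨X + 1, by rw [C_1]; ring⟩ _
  refine dvd_sub_comm.1 (X_sub_C_pow_dvd_sub_of_dvd_sq_sub_sq (hroot.trans hcomp) ?_)
  rw [eval_comp]
  simp [← coeff_zero_eq_eval_zero, coeff_halfPowTaylor]

theorem witnessPoly_eq (n : ℕ) :
    witnessPoly n =
      (-(halfPowTaylor n).comp (X - C 1)).comp (X ^ 2) + C 1 * X ^ (2 * n + 1) := by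
  simp only [witnessPoly, neg_comp, comp_assoc, sub_comp, X_comp, one_comp, C_1]
  ring

theorem natDegree_neg_halfPowTaylor_comp_le (n : ℕ) :
    (-(halfPowTaylor n).comp (X - C 1)).natDegree ≤ 2 * n + 1 := by
  rw [natDegree_neg, natDegree_comp, natDegree_X_sub_C, mul_one]
  exact natDegree_halfPowTaylor_le n

theorem coeff_witnessPoly_top_ne_zero (n : ℕ) : (witnessPoly n).coeff (4 * n + 2) ≠ 0 := by
  have hdeg : (halfPowTaylor n).natDegree = 2 * n + 1 :=
    natDegree_eq_of_le_of_coeff_ne_zero (natDegree_halfPowTaylor_le n)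
      (coeff_halfPowTaylor_ne_zero (by omega))
  have htop := coeff_comp_degree_mul_degree (p := halfPowTaylor n) (q := X ^ 2 - C 1)
    (by rw [natDegree_X_pow_sub_C]; omega)
  rw [hdeg, natDegree_X_pow_sub_C, leadingCoeff_X_pow_sub_C two_pos, one_pow, mul_one,
    leadingCoeff, hdeg, show (2 * n + 1) * 2 = 4 * n + 2 by ring, C_1] at htop
  rw [witnessPoly, coeff_sub, coeff_X_pow, if_neg (by omega), zero_sub, neg_ne_zero, htop]
  exact coeff_halfPowTaylor_ne_zero (by omega)

theorem coeff_zero_witnessPoly_ne_zero (n : ℕ) : (witnessPoly n).coeff 0 ≠ 0 := by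
  have heval : (halfPowTaylor n).eval (-1) =
      ∑ k ∈ Finset.range (2 * n + 2), (-1) ^ k * Ring.choose (((2 * n + 1 : ℕ) : ℂ) / 2) k := by
    rw [halfPowTaylor, eval, PowerSeries.eval₂_trunc_eq_sum_range]
    simp [mul_comm]
  rw [coeff_zero_eq_eval_zero, witnessPoly, eval_sub, eval_comp]
  simp only [eval_sub, eval_pow, eval_X, eval_one, zero_pow two_ne_zero,
    zero_pow (Nat.succ_ne_zero _), zero_sub]
  rw [heval, Ring.sum_range_neg_one_pow_mul_choose]
  have hs : ((2 * n + 1 : ℕ) : ℂ) / 2 - 1 = ((2 * ((n : ℤ) - 1) + 1 : ℤ) : ℂ) / 2 := by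
    push_cast
    ring
  rw [hs]
  simpa [pow_succ, pow_mul] using
    Ring.choose_half_odd_ne_zero (K := ℂ) ((n : ℤ) - 1) (2 * n + 1)

/-- For `n ∈ ℕ`, let `V_n = {q(z²) + c·z^{2n+1} : deg q ≤ 2n+1, c ∈ ℂ}` and
`W_n = {P ∈ V_n : (z-1)^{2n+2} ∣ P}`.  The set of `n` such that `W_n` contains a
polynomial whose `z^{4n+2}`-coefficient and constant coefficient are both nonzero
is infinite. -/
theorem infinitely_many_n_with_good_polynomial :
    {n : ℕ | ∃ P : ℂ[X],
        (∃ q : ℂ[X], q.natDegree ≤ 2 * n + 1 ∧ ∃ c : ℂ,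
            P = q.comp (X ^ 2) + C c * X ^ (2 * n + 1)) ∧
        (X - C 1) ^ (2 * n + 2) ∣ P ∧
        P.coeff (4 * n + 2) ≠ 0 ∧ P.coeff 0 ≠ 0}.Infinite :=
  Set.infinite_univ.mono fun n _ =>
    ⟨witnessPoly n, ⟨_, natDegree_neg_halfPowTaylor_comp_le n, 1, witnessPoly_eq n⟩,
      X_sub_one_pow_dvd_witnessPoly n, coeff_witnessPoly_top_ne_zero n,
      coeff_zero_witnessPoly_ne_zero n⟩
end

section
/- For every n ∈ ℕ, the function f : ℂ × ℂ → ℝ given by f(x,y) = |x·y|^{(2n+1)/2} is n times continuously differentiable in the real sense (ContDiff ℝ n), and for every compact set K ⊆ ℂ × ℂ there is a constant C ≥ 0 such that the n-th iterated derivative of f is 1/2-Hölder continuous on K with constant C. In other words, |xy|^{(2n+1)/2} belongs to C^{n,1/2}_loc(ℂ²). -/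
/-!
On `Ω = {x ≠ 0, y ≠ 0}` the function `f (x, y) = ‖x‖ ^ α * ‖y‖ ^ α` is smooth and homogeneous of
degree `α` in each variable separately. Rescaling from the torus `‖x‖ = ‖y‖ = 1` therefore gives
`‖Dᵏ f p‖ ≤ C * δ p ^ (α - k)` on bounded sets, where `δ (x, y) = min ‖x‖ ‖y‖` is the distance to
the cross `{x = 0} ∪ {y = 0}`. For `k < α` this bound makes `Dᵏ f` continuous and zero on the
cross, and for `k + 1 < α` it makes `Dᵏ f` differentiable there with derivative zero; by induction
`f` is `Cⁿ` for `n < α`. For the Hölder bound on `Dⁿ f` with `β = α - n ∈ (0, 1]`, take `p, q` at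
distance `d`: if `δ p ≥ 2 d`, the mean value theorem with `‖Dⁿ⁺¹ f‖ ≤ C * d ^ (β - 1)` near `p`
applies; otherwise both points lie within `3 d` of the cross, where `‖Dⁿ f‖ ≤ C * (3 d) ^ β`.
-/

open Filter Topology Metric Asymptotics

theorem tendsto_norm_sub_rpow_nhds_zero {E : Type*} [SeminormedAddCommGroup E] (z : E) {γ : ℝ}
    (hγ : 0 < γ) : Tendsto (fun p => ‖p - z‖ ^ γ) (𝓝 z) (𝓝 0) := by
  have := (Real.continuousAt_rpow_const 0 γ (Or.inr hγ.le)).tendsto.comp (tendsto_norm_sub_self z)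
  rwa [Real.zero_rpow hγ.ne'] at this

section NormedSpace

variable {E F : Type*} [NormedAddCommGroup E] [NormedSpace ℝ E]
  [NormedAddCommGroup F] [NormedSpace ℝ F]

theorem Asymptotics.IsBigO.hasFDerivAt_of_rpow {G : E → F} {z : E} {γ : ℝ}
    (h : G =O[𝓝 z] fun p => ‖p - z‖ ^ γ) (hγ : 1 < γ) : HasFDerivAt G (0 : E →L[ℝ] F) z := by
  have hz : G z = 0 := by
    obtain ⟨C, hC⟩ := h.bound
    simpa [Real.zero_rpow (by linarith : γ ≠ 0)] using hC.self_of_nhds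
  have hsplit : (fun p => ‖p - z‖ ^ γ) = fun p => ‖p - z‖ ^ (γ - 1) * ‖p - z‖ := by
    funext p
    rw [← Real.rpow_add_one' (norm_nonneg _) (by linarith), sub_add_cancel]
  rw [hasFDerivAt_iff_isLittleO]
  simp only [hz, sub_zero, zero_apply]
  refine h.trans_isLittleO ?_
  rw [hsplit, ← isLittleO_norm_right]
  simpa using ((isLittleO_one_iff ℝ).2 (tendsto_norm_sub_rpow_nhds_zero z (by linarith))).mul_isBigO
    (isBigO_refl (fun p => ‖p - z‖) (𝓝 z))

theorem norm_sub_le_of_norm_le_rpow_of_norm_fderiv_le {G : E → F} {δ : E → ℝ} {s : Set E}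
    {C β : ℝ} (hs : Convex ℝ s) (hδ : LipschitzWith 1 δ) (hδ0 : ∀ p, 0 ≤ δ p)
    (hβ0 : 0 < β) (hβ1 : β ≤ 1) (hC : 0 ≤ C) (hG : ∀ p ∈ s, ‖G p‖ ≤ C * δ p ^ β)
    (hDG : ∀ p ∈ s, 0 < δ p → DifferentiableAt ℝ G p ∧ ‖fderiv ℝ G p‖ ≤ C * δ p ^ (β - 1))
    {p q : E} (hp : p ∈ s) (hq : q ∈ s) : ‖G p - G q‖ ≤ 6 * C * ‖p - q‖ ^ β := by
  rcases eq_or_ne p q with rfl | hpq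
  · simp [Real.zero_rpow hβ0.ne']
  have hd : 0 < ‖p - q‖ := norm_pos_iff.2 (sub_ne_zero.2 hpq)
  have hδle : ∀ x y, δ x ≤ δ y + ‖x - y‖ := fun x y => by
    simpa [dist_eq_norm] using hδ.le_add_mul x y
  by_cases hfar : 2 * ‖p - q‖ ≤ δ p
  · have hball : ∀ w ∈ s ∩ closedBall p (δ p / 2), ‖p - q‖ ≤ δ w := fun w hw => by
      have := hδle p w
      rw [norm_sub_rev, ← dist_eq_norm] at this
      linarith [hw.2.out]
    have hmvt := (hs.inter (convex_closedBall p (δ p / 2))).norm_image_sub_le_of_norm_fderiv_le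
      (fun w hw => (hDG w hw.1 (hd.trans_le (hball w hw))).1)
      (fun w hw => ((hDG w hw.1 (hd.trans_le (hball w hw))).2.trans
        (mul_le_mul_of_nonneg_left
          (Real.rpow_le_rpow_of_nonpos hd (hball w hw) (by linarith)) hC)))
      ⟨hq, by rw [mem_closedBall, dist_eq_norm, norm_sub_rev]; linarith⟩
      ⟨hp, mem_closedBall_self (by linarith)⟩
    calc ‖G p - G q‖ ≤ C * ‖p - q‖ ^ (β - 1) * ‖p - q‖ := hmvt
      _ = C * ‖p - q‖ ^ β := by rw [Real.rpow_sub_one hd.ne']; field_simp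
      _ ≤ 6 * C * ‖p - q‖ ^ β := by have := Real.rpow_nonneg hd.le β; nlinarith
  · have hsmall : ∀ x ∈ s, δ x ≤ 3 * ‖p - q‖ → ‖G x‖ ≤ 3 * C * ‖p - q‖ ^ β := fun x hx hxd =>
      calc ‖G x‖ ≤ C * δ x ^ β := hG x hx
        _ ≤ C * (3 * ‖p - q‖) ^ β := by gcongr; exact hδ0 x
        _ = 3 ^ β * (C * ‖p - q‖ ^ β) := by rw [Real.mul_rpow (by norm_num) hd.le]; ring
        _ ≤ 3 * (C * ‖p - q‖ ^ β) := by
          gcongr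
          exact Real.rpow_le_self_of_one_le (by norm_num) hβ1
        _ = 3 * C * ‖p - q‖ ^ β := by ring
    calc ‖G p - G q‖ ≤ ‖G p‖ + ‖G q‖ := norm_sub_le _ _
      _ ≤ 3 * C * ‖p - q‖ ^ β + 3 * C * ‖p - q‖ ^ β :=
        add_le_add (hsmall p hp (by linarith))
          (hsmall q hq (by linarith [hδle q p, norm_sub_rev q p]))
      _ = 6 * C * ‖p - q‖ ^ β := by ring

theorem norm_iteratedFDeriv_le_of_comp_eq_smul {f : E → F} (L : E ≃L[ℝ] E)
    {c : ℝ} (hfL : f ∘ L = c • f) {u : E} {k : ℕ} (hf : ContDiffAt ℝ k f u) :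
    ‖iteratedFDeriv ℝ k f (L u)‖ ≤ |c| * ‖iteratedFDeriv ℝ k f u‖ * ‖(L.symm : E →L[ℝ] E)‖ ^ k := by
  have hcomp : iteratedFDeriv ℝ k (f ∘ L) u =
      (iteratedFDeriv ℝ k f (L u)).compContinuousLinearMap fun _ => (L : E →L[ℝ] E) := by
    simpa [iteratedFDerivWithin_univ] using
      L.iteratedFDerivWithin_comp_right f uniqueDiffOn_univ (Set.mem_univ _) k
  have hback : iteratedFDeriv ℝ k f (L u) =
      (iteratedFDeriv ℝ k (f ∘ L) u).compContinuousLinearMap fun _ => (L.symm : E →L[ℝ] E) := by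
    ext v; simp [hcomp]
  rw [hback, hfL, iteratedFDeriv_const_smul_apply hf]
  refine (ContinuousMultilinearMap.norm_compContinuousLinearMap_le _ _).trans_eq ?_
  rw [norm_smul, Real.norm_eq_abs, Finset.prod_const, Finset.card_univ, Fintype.card_fin]

end NormedSpace

section ProdNormRpow

variable {E F : Type*} [NormedAddCommGroup E] [NormedAddCommGroup F] {α : ℝ} {k : ℕ}

-- The distance from `p` to `{x = 0} ∪ {y = 0}` for the sup norm of `E × F`.
noncomputable def minNorm (p : E × F) : ℝ := min ‖p.1‖ ‖p.2‖

theorem minNorm_nonneg (p : E × F) : 0 ≤ minNorm p := le_min (norm_nonneg _) (norm_nonneg _)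

theorem minNorm_pos_iff {p : E × F} : 0 < minNorm p ↔ p.1 ≠ 0 ∧ p.2 ≠ 0 := by
  simp [minNorm]

theorem lipschitzWith_one_minNorm : LipschitzWith 1 (minNorm : E × F → ℝ) := by
  show LipschitzWith 1 fun p : E × F => min ‖p.1‖ ‖p.2‖
  simpa using (lipschitzWith_one_norm.comp LipschitzWith.prod_fst).min
    (lipschitzWith_one_norm.comp (LipschitzWith.prod_snd (α := E) (β := F)))

theorem minNorm_le_norm_sub {p z : E × F} (hz : minNorm z = 0) : minNorm p ≤ ‖p - z‖ := by
  simpa [hz, dist_eq_norm] using lipschitzWith_one_minNorm.le_add_mul p z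

noncomputable def prodNormRpow (α : ℝ) (p : E × F) : ℝ := ‖p.1‖ ^ α * ‖p.2‖ ^ α

theorem prodNormRpow_eq (α : ℝ) (p : E × F) : prodNormRpow α p = ‖p‖ ^ α * minNorm p ^ α := by
  rw [prodNormRpow, ← Real.mul_rpow (norm_nonneg _) (norm_nonneg _),
    ← Real.mul_rpow (norm_nonneg _) (minNorm_nonneg _), Prod.norm_def, minNorm, max_mul_min]

theorem prodNormRpow_nonneg (α : ℝ) (p : E × F) : 0 ≤ prodNormRpow α p :=
  mul_nonneg (Real.rpow_nonneg (norm_nonneg _) α) (Real.rpow_nonneg (norm_nonneg _) α)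

theorem prodNormRpow_eq_zero (hα : α ≠ 0) {p : E × F} (hp : minNorm p = 0) :
    prodNormRpow α p = 0 := by
  rw [prodNormRpow_eq, hp, Real.zero_rpow hα, mul_zero]

theorem prodNormRpow_smul [NormedSpace ℝ E] [NormedSpace ℝ F] {a b : ℝ} (ha : 0 ≤ a) (hb : 0 ≤ b)
    (p : E × F) : prodNormRpow α (a • p.1, b • p.2) = a ^ α * b ^ α * prodNormRpow α p := by
  simp only [prodNormRpow, norm_smul, Real.norm_of_nonneg ha, Real.norm_of_nonneg hb,
    Real.mul_rpow ha (norm_nonneg _), Real.mul_rpow hb (norm_nonneg _)]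
  ring

variable [InnerProductSpace ℝ E] [InnerProductSpace ℝ F]

theorem contDiffAt_prodNormRpow {n : WithTop ℕ∞} {p : E × F} (hp : 0 < minNorm p) :
    ContDiffAt ℝ n (prodNormRpow α) p := by
  obtain ⟨hx, hy⟩ := minNorm_pos_iff.1 hp
  exact (((contDiffAt_norm ℝ hx).comp p contDiffAt_fst).rpow_const_of_ne
    (norm_ne_zero_iff.2 hx)).mul (((contDiffAt_norm ℝ hy).comp p contDiffAt_snd).rpow_const_of_ne
      (norm_ne_zero_iff.2 hy))

theorem contDiffAt_iteratedFDeriv_prodNormRpow {m : WithTop ℕ∞} {p : E × F} (hp : 0 < minNorm p) :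
    ContDiffAt ℝ m (iteratedFDeriv ℝ k (prodNormRpow α)) p :=
  (contDiffAt_prodNormRpow (n := ⊤) hp).iteratedFDeriv_right le_top

theorem norm_iteratedFDeriv_prodNormRpow_le {p : E × F} (hp : 0 < minNorm p) :
    ‖iteratedFDeriv ℝ k (prodNormRpow α) p‖ ≤ prodNormRpow α p *
      ‖iteratedFDeriv ℝ k (prodNormRpow α) (‖p.1‖⁻¹ • p.1, ‖p.2‖⁻¹ • p.2)‖ * (minNorm p)⁻¹ ^ k := by
  obtain ⟨hx, hy⟩ := minNorm_pos_iff.1 hp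
  have ha : ‖p.1‖ ≠ 0 := norm_ne_zero_iff.2 hx
  have hb : ‖p.2‖ ≠ 0 := norm_ne_zero_iff.2 hy
  let L : (E × F) ≃L[ℝ] (E × F) := (ContinuousLinearEquiv.smulLeft (Units.mk0 _ ha)).prodCongr
    (ContinuousLinearEquiv.smulLeft (Units.mk0 _ hb))
  have hLu : L (‖p.1‖⁻¹ • p.1, ‖p.2‖⁻¹ • p.2) = p := by simp [L, smul_smul, ha, hb]
  have hfL : prodNormRpow α ∘ L = prodNormRpow α p • prodNormRpow α :=
    funext (prodNormRpow_smul (norm_nonneg p.1) (norm_nonneg p.2))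
  have hLsymm : ‖(L.symm : (E × F) →L[ℝ] (E × F))‖ ≤ (minNorm p)⁻¹ := by
    refine ContinuousLinearMap.opNorm_le_bound _ (inv_nonneg.2 hp.le) fun w => ?_
    have hLw : L.symm w = (‖p.1‖⁻¹ • w.1, ‖p.2‖⁻¹ • w.2) := by
      rw [ContinuousLinearEquiv.symm_apply_eq]
      simp [L, smul_smul, ha, hb]
    rw [ContinuousLinearEquiv.coe_coe, hLw, Prod.norm_def, norm_smul, norm_smul, norm_inv,
      norm_norm, norm_inv, norm_norm]
    refine max_le ?_ ?_
    · gcongr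
      exacts [min_le_left _ _, norm_fst_le w]
    · gcongr
      exacts [min_le_right _ _, norm_snd_le w]
  have hu : 0 < minNorm (‖p.1‖⁻¹ • p.1, ‖p.2‖⁻¹ • p.2) := by simp [minNorm, norm_smul, ha, hb]
  have key := norm_iteratedFDeriv_le_of_comp_eq_smul L hfL (contDiffAt_prodNormRpow (n := k) hu)
  rw [hLu, abs_of_nonneg (prodNormRpow_nonneg α p)] at key
  exact key.trans (mul_le_mul_of_nonneg_left (pow_le_pow_left₀ (norm_nonneg _) hLsymm k)
    (mul_nonneg (prodNormRpow_nonneg α p) (norm_nonneg _)))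

variable [FiniteDimensional ℝ E] [FiniteDimensional ℝ F]

theorem exists_norm_iteratedFDeriv_prodNormRpow_le (α : ℝ) (k : ℕ) :
    ∃ M, 0 ≤ M ∧ ∀ p : E × F, 0 < minNorm p →
      ‖iteratedFDeriv ℝ k (prodNormRpow α) p‖ ≤ M * ‖p‖ ^ α * minNorm p ^ (α - k) := by
  obtain ⟨M, hM⟩ : ∃ M, ∀ u ∈ sphere (0 : E) 1 ×ˢ sphere (0 : F) 1,
      ‖iteratedFDeriv ℝ k (prodNormRpow α) u‖ ≤ M := by
    refine ((isCompact_sphere 0 1).prod (isCompact_sphere 0 1)).exists_bound_of_continuousOn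
      fun u hu => ContinuousAt.continuousWithinAt ?_
    have hu : 0 < minNorm u := by simp_all [minNorm]
    exact (contDiffAt_iteratedFDeriv_prodNormRpow (m := 0) hu).continuousAt
  refine ⟨max M 0, le_max_right _ _, fun p hp => ?_⟩
  obtain ⟨hx, hy⟩ := minNorm_pos_iff.1 hp
  have hu : (‖p.1‖⁻¹ • p.1, ‖p.2‖⁻¹ • p.2) ∈ sphere (0 : E) 1 ×ˢ sphere (0 : F) 1 := by
    simp [norm_smul, hx, hy]
  calc ‖iteratedFDeriv ℝ k (prodNormRpow α) p‖
      ≤ prodNormRpow α p * max M 0 * (minNorm p)⁻¹ ^ k := by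
        refine (norm_iteratedFDeriv_prodNormRpow_le hp).trans ?_
        have := prodNormRpow_nonneg α p
        gcongr
        exact (hM _ hu).trans (le_max_left _ _)
    _ = max M 0 * ‖p‖ ^ α * minNorm p ^ (α - k) := by
        rw [prodNormRpow_eq, Real.rpow_sub hp, Real.rpow_natCast, inv_pow, div_eq_mul_inv]
        ring

theorem exists_norm_iteratedFDeriv_prodNormRpow_le_of_norm_le (hα : 0 ≤ α) (k : ℕ) (R : ℝ) :
    ∃ C, 0 ≤ C ∧ ∀ p : E × F, 0 < minNorm p → ‖p‖ ≤ R →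
      ‖iteratedFDeriv ℝ k (prodNormRpow α) p‖ ≤ C * minNorm p ^ (α - k) := by
  obtain ⟨M, hM0, hM⟩ := exists_norm_iteratedFDeriv_prodNormRpow_le (E := E) (F := F) α k
  refine ⟨M * |R| ^ α, by positivity, fun p hp hpR => (hM p hp).trans ?_⟩
  have := hpR.trans (le_abs_self R)
  gcongr

theorem isBigO_iteratedFDeriv_prodNormRpow (hk : (k : ℝ) < α)
    (hzero : ∀ p : E × F, minNorm p = 0 → iteratedFDeriv ℝ k (prodNormRpow α) p = 0)
    {z : E × F} (hz : minNorm z = 0) :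
    iteratedFDeriv ℝ k (prodNormRpow α) =O[𝓝 z] fun p => ‖p - z‖ ^ (α - k) := by
  obtain ⟨C, hC, hb⟩ := exists_norm_iteratedFDeriv_prodNormRpow_le_of_norm_le (E := E) (F := F)
    ((Nat.cast_nonneg k).trans hk.le) k (‖z‖ + 1)
  refine IsBigO.of_bound C ?_
  filter_upwards [ball_mem_nhds z one_pos] with p hp
  rw [Real.norm_of_nonneg (Real.rpow_nonneg (norm_nonneg _) _)]
  rcases (minNorm_nonneg p).eq_or_lt with hp0 | hp0
  · rw [hzero p hp0.symm, norm_zero]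
    positivity
  rw [mem_ball, dist_eq_norm] at hp
  refine (hb p hp0 (by linarith [norm_sub_norm_le p z])).trans ?_
  have := minNorm_le_norm_sub (p := p) hz
  gcongr

theorem hasFDerivAt_iteratedFDeriv_prodNormRpow (hk : (k : ℝ) + 1 < α)
    (hzero : ∀ p : E × F, minNorm p = 0 → iteratedFDeriv ℝ k (prodNormRpow α) p = 0)
    {z : E × F} (hz : minNorm z = 0) :
    HasFDerivAt (iteratedFDeriv ℝ k (prodNormRpow α)) (0 : E × F →L[ℝ] _) z :=
  (isBigO_iteratedFDeriv_prodNormRpow (by linarith) hzero hz).hasFDerivAt_of_rpow (by linarith)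

theorem iteratedFDeriv_prodNormRpow_eq_zero (hk : (k : ℝ) < α) {z : E × F} (hz : minNorm z = 0) :
    iteratedFDeriv ℝ k (prodNormRpow α) z = 0 := by
  induction k generalizing z with
  | zero =>
    rw [Nat.cast_zero] at hk
    ext
    simp [prodNormRpow_eq_zero hk.ne' hz]
  | succ k ih =>
    push_cast at hk
    rw [iteratedFDeriv_succ_eq_comp_left, Function.comp_apply,
      (hasFDerivAt_iteratedFDeriv_prodNormRpow hk (fun p hp => ih (by linarith) hp) hz).fderiv,
      LinearIsometryEquiv.map_zero]

theorem continuous_iteratedFDeriv_prodNormRpow (hk : (k : ℝ) < α) :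
    Continuous (iteratedFDeriv ℝ k (prodNormRpow α) : E × F → _) := by
  refine continuous_iff_continuousAt.2 fun z => ?_
  rcases (minNorm_nonneg z).eq_or_lt with hz | hz
  · rw [ContinuousAt, iteratedFDeriv_prodNormRpow_eq_zero hk hz.symm]
    exact (isBigO_iteratedFDeriv_prodNormRpow hk (fun p => iteratedFDeriv_prodNormRpow_eq_zero hk)
      hz.symm).trans_tendsto (tendsto_norm_sub_rpow_nhds_zero z (by linarith))
  · exact (contDiffAt_iteratedFDeriv_prodNormRpow (m := 0) hz).continuousAt

theorem differentiable_iteratedFDeriv_prodNormRpow (hk : (k : ℝ) + 1 < α) :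
    Differentiable ℝ (iteratedFDeriv ℝ k (prodNormRpow α) : E × F → _) := fun z => by
  rcases (minNorm_nonneg z).eq_or_lt with hz | hz
  · exact (hasFDerivAt_iteratedFDeriv_prodNormRpow hk
      (fun p => iteratedFDeriv_prodNormRpow_eq_zero (by linarith)) hz.symm).differentiableAt
  · exact (contDiffAt_iteratedFDeriv_prodNormRpow (m := 1) hz).differentiableAt one_ne_zero

theorem contDiff_prodNormRpow {n : ℕ} (hn : (n : ℝ) < α) :
    ContDiff ℝ n (prodNormRpow α : E × F → ℝ) :=
  contDiff_nat_iff_continuous_differentiable.2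
    ⟨fun m hm => continuous_iteratedFDeriv_prodNormRpow (lt_of_le_of_lt (by exact_mod_cast hm) hn),
      fun m hm => differentiable_iteratedFDeriv_prodNormRpow
        (lt_of_le_of_lt (by exact_mod_cast hm) hn)⟩

theorem exists_holder_iteratedFDeriv_prodNormRpow {n : ℕ} (hn : (n : ℝ) < α) (hα : α ≤ n + 1)
    {K : Set (E × F)} (hK : IsCompact K) : ∃ C, 0 ≤ C ∧ ∀ p ∈ K, ∀ q ∈ K,
      ‖iteratedFDeriv ℝ n (prodNormRpow α) p - iteratedFDeriv ℝ n (prodNormRpow α) q‖ ≤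
        C * ‖p - q‖ ^ (α - n) := by
  have hα0 : 0 ≤ α := (Nat.cast_nonneg n).trans hn.le
  obtain ⟨R, -, hKR⟩ := hK.isBounded.subset_closedBall_lt 0 0
  obtain ⟨C₀, hC₀, hb₀⟩ := exists_norm_iteratedFDeriv_prodNormRpow_le_of_norm_le (E := E) (F := F)
    hα0 n R
  obtain ⟨C₁, hC₁, hb₁⟩ := exists_norm_iteratedFDeriv_prodNormRpow_le_of_norm_le (E := E) (F := F)
    hα0 (n + 1) R
  refine ⟨6 * max C₀ C₁, by positivity, fun p hp q hq =>
    norm_sub_le_of_norm_le_rpow_of_norm_fderiv_le (convex_closedBall 0 R)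
      lipschitzWith_one_minNorm minNorm_nonneg (sub_pos.2 hn) (by linarith) (by positivity)
      (fun w hw => ?_) (fun w hw hw0 => ⟨?_, ?_⟩) (hKR hp) (hKR hq)⟩
  all_goals rw [mem_closedBall_zero_iff] at hw
  · rcases (minNorm_nonneg w).eq_or_lt with hw0 | hw0
    · rw [iteratedFDeriv_prodNormRpow_eq_zero hn hw0.symm, norm_zero, ← hw0,
        Real.zero_rpow (by linarith), mul_zero]
    · exact (hb₀ w hw0 hw).trans (mul_le_mul_of_nonneg_right (le_max_left _ _)
        (Real.rpow_nonneg (minNorm_nonneg w) _))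
  · exact (contDiffAt_iteratedFDeriv_prodNormRpow (m := 1) hw0).differentiableAt one_ne_zero
  · rw [norm_fderiv_iteratedFDeriv, show α - n - 1 = α - ((n + 1 : ℕ) : ℝ) by push_cast; ring]
    exact (hb₁ w hw0 hw).trans (mul_le_mul_of_nonneg_right (le_max_right _ _)
      (Real.rpow_nonneg (minNorm_nonneg w) _))

end ProdNormRpow

/-- For every `n ∈ ℕ`, the function `(x,y) ↦ |xy|^{(2n+1)/2}` on `ℂ²` is `C^n`
in the real sense, and its `n`-th iterated derivative is `1/2`-Hölder continuous
on every compact set; i.e. `|xy|^{(2n+1)/2} ∈ C^{n,1/2}_loc(ℂ²)`. -/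
theorem absPow_prod_contDiff_and_holder (n : ℕ) :
    ContDiff ℝ n (fun p : ℂ × ℂ => ‖p.1 * p.2‖ ^ ((2 * (n : ℝ) + 1) / 2)) ∧
    ∀ K : Set (ℂ × ℂ), IsCompact K → ∃ C : ℝ, 0 ≤ C ∧
      ∀ p ∈ K, ∀ q ∈ K,
        ‖iteratedFDeriv ℝ n (fun p : ℂ × ℂ => ‖p.1 * p.2‖ ^ ((2 * (n : ℝ) + 1) / 2)) p
          - iteratedFDeriv ℝ n (fun p : ℂ × ℂ => ‖p.1 * p.2‖ ^ ((2 * (n : ℝ) + 1) / 2)) q‖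
        ≤ C * ‖p - q‖ ^ ((1 : ℝ) / 2) := by
  have hf : (fun p : ℂ × ℂ => ‖p.1 * p.2‖ ^ ((2 * (n : ℝ) + 1) / 2)) =
      prodNormRpow ((2 * n + 1) / 2) :=
    funext fun p => by rw [norm_mul, Real.mul_rpow (norm_nonneg _) (norm_nonneg _), prodNormRpow]
  have hn : (n : ℝ) < (2 * n + 1) / 2 := by linarith
  rw [hf]
  refine ⟨contDiff_prodNormRpow hn, fun K hK => ?_⟩
  obtain ⟨C, hC, hK⟩ := exists_holder_iteratedFDeriv_prodNormRpow hn (by linarith) hK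
  refine ⟨C, hC, fun p hp q hq => (hK p hp q hq).trans_eq ?_⟩
  congr 2
  ring
end

section
/- For every n ∈ ℕ, the function f : ℂ × ℂ → ℝ given by f(x,y) = |x·y|^{(2n+1)/2} is not infinitely differentiable in the real sense on ℂ²; that is, ¬ ContDiff ℝ ∞ f. -/
/-!
Along the line `t ↦ (t, 1)` the function is `t ↦ |t| ^ (n + 1/2)`. For `t > 0` the `(n+1)`-st
derivative of `t ^ β` is `β (β - 1) ⋯ (β - n) t ^ (β - n - 1)`; with `β = n + 1/2` the coefficient is
nonzero because `β` is not an integer, so this derivative blows up like `t ^ (-1/2)` as `t → 0⁺`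
and cannot extend continuously to `0`.
-/

open Filter Set Topology

theorem descPochhammer_eval_ne_zero {R : Type*} [CommRing R] [IsDomain R] {r : R} {k : ℕ}
    (hr : ∀ j < k, r ≠ j) : (descPochhammer R k).eval r ≠ 0 := by
  rw [descPochhammer_eval_eq_prod_range, Finset.prod_ne_zero_iff]
  exact fun j hj => sub_ne_zero.2 (hr j (Finset.mem_range.1 hj))

theorem not_contDiff_of_eqOn_rpow {g : ℝ → ℝ} {β : ℝ} {k : ℕ} (hβk : β < k)
    (hβ : ∀ j < k, β ≠ j) (hg : EqOn g (· ^ β) (Ioi 0)) : ¬ ContDiff ℝ k g := by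
  intro hsmooth
  set c := (descPochhammer ℝ k).eval β
  have hc : c ≠ 0 := descPochhammer_eval_ne_zero hβ
  have hderiv : EqOn (iteratedDeriv k g) (fun t => c * t ^ (β - k)) (Ioi 0) := by
    intro t ht
    rw [hg.iteratedDeriv_of_isOpen isOpen_Ioi k ht, iteratedDeriv_eq_iterate,
      Real.iter_deriv_rpow_const]
  have hcont : Tendsto (fun t => c⁻¹ * iteratedDeriv k g t) (𝓝[>] 0)
      (𝓝 (c⁻¹ * iteratedDeriv k g 0)) :=
    ((hsmooth.continuous_iteratedDeriv' k).tendsto 0).const_mul _ |>.mono_left nhdsWithin_le_nhds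
  have hblowup : Tendsto (fun t => c⁻¹ * iteratedDeriv k g t) (𝓝[>] 0) atTop := by
    refine (tendsto_rpow_neg_nhdsGT_zero (sub_neg.2 hβk)).congr' ?_
    filter_upwards [self_mem_nhdsWithin] with t ht
    rw [hderiv ht, inv_mul_cancel_left₀ hc]
  exact not_tendsto_atTop_of_tendsto_nhds hcont hblowup

/-- For every `n ∈ ℕ`, the function `(x,y) ↦ |xy|^{(2n+1)/2}` on `ℂ²` is not
infinitely differentiable in the real sense. -/
theorem absPow_prod_not_smooth (n : ℕ) :
    ¬ ContDiff ℝ ((⊤ : ℕ∞) : WithTop ℕ∞)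
        (fun p : ℂ × ℂ => ‖p.1 * p.2‖ ^ ((2 * (n : ℝ) + 1) / 2)) := by
  intro h
  have hline : ContDiff ℝ (n + 1 : ℕ) fun t : ℝ => ‖(t : ℂ) * 1‖ ^ ((2 * (n : ℝ) + 1) / 2) :=
    (h.comp (Complex.ofRealCLM.contDiff.prodMk contDiff_const)).of_le (by exact_mod_cast le_top)
  refine not_contDiff_of_eqOn_rpow (β := (2 * (n : ℝ) + 1) / 2) ?_ ?_ ?_ hline
  · push_cast; linarith
  · intro j _ heq
    have : (2 * n + 1 : ℝ) = (2 * j : ℕ) := by push_cast; linarith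
    norm_cast at this
    omega
  · intro t ht
    simp [abs_of_pos (show (0 : ℝ) < t from ht)]
end

section
/- Let F(x,y) = Σ_{m,n≥0} a_{m,n} x^m y^n be given by a power series converging absolutely on a polydisc {|x| < R₀, |y| < R₀} with R₀ > 0, and let k, l be positive integers such that a_{m,n} = 0 whenever l·m + k·n < k·l. Define the quasi-homogeneous polynomial G(z,w) := Σ_{(m,n) : l·m + k·n = k·l} a_{m,n} z^m w^n (a finite sum). Then for every R₁ > 1, the functions z ↦ s^{−kl}·F(s^l·z, s^k·z^{−1}) converge uniformly to z ↦ G(z, z^{−1}) on the closed annulus {z ∈ ℂ : 1/R₁ ≤ |z| ≤ R₁} as s → 0 (s ∈ ℂ \ {0}). -/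
/-!
Substituting `x = s^l z`, `y = s^k w` turns `a_{m,n} x^m y^n / s^{kl}` into
`a_{m,n} s^{lm+kn-kl} z^m w^n`. Monomials below the Newton segment vanish and those on it are
exactly the monomials of `G`. Above it `lm + kn - kl ≥ 1`, so for `|s| ≤ δ` the monomial is at
most `|s| δ^{-(kl+1)} |a_{m,n}| (δ^l |z|)^m (δ^k |w|)^n`. Taking `δ` so small that
`δ^l |z|, δ^k |w| ≤ ρ < R₀`, the convergent majorant `∑ |a_{m,n}| ρ^{m+n}` bounds the
difference by `C |s|` uniformly on the bidisc `|z|, |w| ≤ R`, which contains `(z, z⁻¹)` for `z`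
in the annulus.
-/

open Filter Topology Finset Metric

theorem tendstoUniformlyOn_of_dist_le {ι β α : Type*} [PseudoMetricSpace α]
    {F : ι → β → α} {f : β → α} {p : Filter ι} {S : Set β} {b : ι → ℝ}
    (hb : Tendsto b p (𝓝 0)) (h : ∀ᶠ i in p, ∀ x ∈ S, dist (f x) (F i x) ≤ b i) :
    TendstoUniformlyOn F f p S := by
  rw [Metric.tendstoUniformlyOn_iff]
  intro ε hε
  filter_upwards [h, hb.eventually (gt_mem_nhds hε)] with i hi hbi x hx
  exact (hi x hx).trans_lt hbi

theorem pow_div_pow_le_div_pow_mul_pow {R : Type*} [Field R] [LinearOrder R]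
    [IsStrictOrderedRing R] {t δ : R} (ht : 0 < t) (htδ : t ≤ δ) {i j : ℕ} (hij : i < j) :
    t ^ j / t ^ i ≤ t / δ ^ (i + 1) * δ ^ j := by
  obtain ⟨e, rfl⟩ := Nat.exists_eq_add_of_lt hij
  have hδ : 0 < δ := ht.trans_le htδ
  calc t ^ (i + e + 1) / t ^ i = t * t ^ e := by field_simp; ring
    _ ≤ t * δ ^ e := by gcongr
    _ = t / δ ^ (i + 1) * δ ^ (i + e + 1) := by field_simp; ring

theorem le_and_le_of_mul_add_mul_eq {k l m n : ℕ} (hk : 0 < k) (hl : 0 < l)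
    (h : l * m + k * n = k * l) : m ≤ k ∧ n ≤ l := by
  constructor <;> nlinarith

section NewtonPart

variable {R : Type*} [CommSemiring R]

def newtonPart (a : ℕ → ℕ → R) (k l : ℕ) (z w : R) : R :=
  ∑ m ∈ range (k + 1), ∑ n ∈ range (l + 1),
    (if l * m + k * n = k * l then a m n else 0) * z ^ m * w ^ n

def newtonTerm (a : ℕ → ℕ → R) (k l : ℕ) (z w : R) (mn : ℕ × ℕ) : R :=
  if l * mn.1 + k * mn.2 = k * l then a mn.1 mn.2 * z ^ mn.1 * w ^ mn.2 else 0

theorem hasSum_newtonTerm [TopologicalSpace R] (a : ℕ → ℕ → R) {k l : ℕ} (hk : 0 < k)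
    (hl : 0 < l) (z w : R) :
    HasSum (newtonTerm a k l z w) (newtonPart a k l z w) := by
  have hsupp : ∀ mn ∉ range (k + 1) ×ˢ range (l + 1), newtonTerm a k l z w mn = 0 := by
    rintro ⟨m, n⟩ hmn
    refine if_neg fun h => hmn ?_
    obtain ⟨hm, hn⟩ := le_and_le_of_mul_add_mul_eq hk hl h
    simpa [Nat.lt_succ_iff] using And.intro hm hn
  have hsum : newtonPart a k l z w
      = ∑ mn ∈ range (k + 1) ×ˢ range (l + 1), newtonTerm a k l z w mn := by
    simp only [newtonPart, sum_product, newtonTerm, ite_mul, zero_mul]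
  exact hsum ▸ hasSum_sum_of_ne_finset_zero hsupp

end NewtonPart

theorem rescaled_monomial_eq {K : Type*} [Field K] (c s z w : K) (k l m n : ℕ) :
    c * (s ^ l * z) ^ m * (s ^ k * w) ^ n / s ^ (k * l)
      = c * z ^ m * w ^ n * (s ^ (l * m + k * n) / s ^ (k * l)) := by
  ring

theorem norm_rescaled_term_sub_newtonTerm_le {𝕜 : Type*} [NormedField 𝕜] {a : ℕ → ℕ → 𝕜}
    {k l : ℕ} (hNewton : ∀ m n : ℕ, l * m + k * n < k * l → a m n = 0) {s z w : 𝕜} (hs : s ≠ 0)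
    {δ ρ : ℝ} (hsδ : ‖s‖ ≤ δ) (hz : δ ^ l * ‖z‖ ≤ ρ) (hw : δ ^ k * ‖w‖ ≤ ρ) (mn : ℕ × ℕ) :
    ‖a mn.1 mn.2 * (s ^ l * z) ^ mn.1 * (s ^ k * w) ^ mn.2 / s ^ (k * l)
        - newtonTerm a k l z w mn‖
      ≤ ‖s‖ / δ ^ (k * l + 1) * (‖a mn.1 mn.2‖ * ρ ^ mn.1 * ρ ^ mn.2) := by
  obtain ⟨m, n⟩ := mn
  have ht : 0 < ‖s‖ := norm_pos_iff.2 hs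
  have hδ : 0 < δ := ht.trans_le hsδ
  have hρ : 0 ≤ ρ := le_trans (by positivity) hz
  rw [newtonTerm, rescaled_monomial_eq]
  rcases lt_trichotomy (l * m + k * n) (k * l) with hlt | heq | hgt
  · simp only [hNewton m n hlt, if_neg hlt.ne, zero_mul, sub_zero, norm_zero]
    positivity
  · rw [if_pos heq, heq, div_self (pow_ne_zero _ hs), mul_one, sub_self, norm_zero]
    positivity
  · rw [if_neg hgt.ne', sub_zero]
    calc ‖a m n * z ^ m * w ^ n * (s ^ (l * m + k * n) / s ^ (k * l))‖
        = ‖a m n‖ * (‖s‖ ^ (l * m + k * n) / ‖s‖ ^ (k * l)) * (‖z‖ ^ m * ‖w‖ ^ n) := by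
          simp only [norm_div, norm_mul, norm_pow]; ring
      _ ≤ ‖a m n‖ * (‖s‖ / δ ^ (k * l + 1) * δ ^ (l * m + k * n)) * (‖z‖ ^ m * ‖w‖ ^ n) := by
          gcongr; exact pow_div_pow_le_div_pow_mul_pow ht hsδ hgt
      _ = ‖s‖ / δ ^ (k * l + 1) * (‖a m n‖ * (δ ^ l * ‖z‖) ^ m * (δ ^ k * ‖w‖) ^ n) := by ring
      _ ≤ ‖s‖ / δ ^ (k * l + 1) * (‖a m n‖ * ρ ^ m * ρ ^ n) := by gcongr

theorem norm_rescaled_sub_newtonPart_le {𝕜 : Type*} [NormedField 𝕜] [CompleteSpace 𝕜]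
    {R₀ : ℝ} {a : ℕ → ℕ → 𝕜} {F : 𝕜 → 𝕜 → 𝕜}
    (hconv : ∀ x y : 𝕜, ‖x‖ < R₀ → ‖y‖ < R₀ →
      Summable (fun mn : ℕ × ℕ => ‖a mn.1 mn.2‖ * ‖x‖ ^ mn.1 * ‖y‖ ^ mn.2))
    (hF : ∀ x y : 𝕜, ‖x‖ < R₀ → ‖y‖ < R₀ →
      F x y = ∑' mn : ℕ × ℕ, a mn.1 mn.2 * x ^ mn.1 * y ^ mn.2)
    {k l : ℕ} (hk : 0 < k) (hl : 0 < l)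
    (hNewton : ∀ m n : ℕ, l * m + k * n < k * l → a m n = 0)
    {ρ : ℝ} (hρR₀ : ρ < R₀)
    (hmajorant : Summable fun mn : ℕ × ℕ => ‖a mn.1 mn.2‖ * ρ ^ mn.1 * ρ ^ mn.2)
    {s z w : 𝕜} (hs : s ≠ 0) {δ : ℝ} (hsδ : ‖s‖ ≤ δ) (hz : δ ^ l * ‖z‖ ≤ ρ)
    (hw : δ ^ k * ‖w‖ ≤ ρ) :
    ‖F (s ^ l * z) (s ^ k * w) / s ^ (k * l) - newtonPart a k l z w‖
      ≤ ‖s‖ / δ ^ (k * l + 1) * ∑' mn : ℕ × ℕ, ‖a mn.1 mn.2‖ * ρ ^ mn.1 * ρ ^ mn.2 := by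
  have hmem : ∀ j (x : 𝕜), δ ^ j * ‖x‖ ≤ ρ → ‖s ^ j * x‖ < R₀ := fun j x h =>
    calc ‖s ^ j * x‖ ≤ δ ^ j * ‖x‖ := by rw [norm_mul, norm_pow]; gcongr
      _ < R₀ := h.trans_lt hρR₀
  have hx := hmem l z hz
  have hy := hmem k w hw
  have hsum : Summable fun mn : ℕ × ℕ =>
      a mn.1 mn.2 * (s ^ l * z) ^ mn.1 * (s ^ k * w) ^ mn.2 :=
    .of_norm (by simpa only [norm_mul, norm_pow] using hconv _ _ hx hy)
  have hnewton := hasSum_newtonTerm a hk hl z w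
  rw [hF _ _ hx hy, ← tsum_div_const, ← hnewton.tsum_eq,
    ← (hsum.div_const _).tsum_sub hnewton.summable]
  exact tsum_of_norm_bounded (hmajorant.hasSum.mul_left _)
    (norm_rescaled_term_sub_newtonTerm_le hNewton hs hsδ hz hw)

theorem tendstoUniformlyOn_rescaled_newtonPart {𝕜 : Type*} [NontriviallyNormedField 𝕜]
    [CompleteSpace 𝕜] {R₀ : ℝ} (hR₀ : 0 < R₀) {a : ℕ → ℕ → 𝕜} {F : 𝕜 → 𝕜 → 𝕜}
    (hconv : ∀ x y : 𝕜, ‖x‖ < R₀ → ‖y‖ < R₀ →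
      Summable (fun mn : ℕ × ℕ => ‖a mn.1 mn.2‖ * ‖x‖ ^ mn.1 * ‖y‖ ^ mn.2))
    (hF : ∀ x y : 𝕜, ‖x‖ < R₀ → ‖y‖ < R₀ →
      F x y = ∑' mn : ℕ × ℕ, a mn.1 mn.2 * x ^ mn.1 * y ^ mn.2)
    {k l : ℕ} (hk : 0 < k) (hl : 0 < l)
    (hNewton : ∀ m n : ℕ, l * m + k * n < k * l → a m n = 0) (R : ℝ) :
    TendstoUniformlyOn (fun (s : 𝕜) (p : 𝕜 × 𝕜) => F (s ^ l * p.1) (s ^ k * p.2) / s ^ (k * l))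
      (fun p => newtonPart a k l p.1 p.2) (𝓝[≠] 0) (closedBall 0 R) := by
  obtain ⟨x₀, hρ, hρR₀⟩ := NormedField.exists_norm_lt 𝕜 hR₀
  obtain ⟨c, hc, hRc⟩ := exists_pos_mul_lt hρ R
  set δ := min 1 c
  have hδ : 0 < δ := lt_min one_pos hc
  have hδρ : ∀ j, 0 < j → ∀ x : 𝕜, ‖x‖ ≤ R → δ ^ j * ‖x‖ ≤ ‖x₀‖ := fun j hj x hx =>
    calc δ ^ j * ‖x‖ ≤ c * R := by
          gcongr
          exact (pow_le_of_le_one hδ.le (min_le_left _ _) hj.ne').trans (min_le_right _ _)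
      _ ≤ ‖x₀‖ := by linarith
  refine tendstoUniformlyOn_of_dist_le (b := fun s => ‖s‖ / δ ^ (k * l + 1) *
    ∑' mn : ℕ × ℕ, ‖a mn.1 mn.2‖ * ‖x₀‖ ^ mn.1 * ‖x₀‖ ^ mn.2) ?_ ?_
  · have hnorm : Tendsto (fun s : 𝕜 => ‖s‖) (𝓝[≠] 0) (𝓝 0) :=
      tendsto_norm_zero.mono_left nhdsWithin_le_nhds
    simpa using (hnorm.div_const _).mul_const _
  filter_upwards [mem_nhdsWithin_of_mem_nhds (closedBall_mem_nhds 0 hδ), self_mem_nhdsWithin]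
    with s hsδ hs p hp
  rw [mem_closedBall_zero_iff] at hsδ hp
  rw [dist_eq_norm']
  exact norm_rescaled_sub_newtonPart_le hconv hF hk hl hNewton hρR₀ (hconv x₀ x₀ hρR₀ hρR₀) hs
    hsδ (hδρ l hl p.1 ((norm_fst_le p).trans hp)) (hδρ k hk p.2 ((norm_snd_le p).trans hp))

/-- If the Newton polygon condition `a_{m,n} = 0` for `l·m + k·n < k·l` holds, then
the rescaled functions `z ↦ s^{-kl}·F(s^l·z, s^k·z⁻¹)` converge uniformly, as
`s → 0` with `s ≠ 0`, to `z ↦ G(z, z⁻¹)` on every closed annulus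
`{1/R₁ ≤ |z| ≤ R₁}` with `R₁ > 1`, where `G(z,w) = Σ_{l·m + k·n = k·l} a_{m,n} z^m w^n`
collects the monomials of `F` on the Newton segment. -/
theorem rescaled_uniform_convergence_to_newton_part
    (R₀ : ℝ) (hR₀ : 0 < R₀) (a : ℕ → ℕ → ℂ) (F : ℂ → ℂ → ℂ)
    (hconv : ∀ x y : ℂ, ‖x‖ < R₀ → ‖y‖ < R₀ →
      Summable (fun mn : ℕ × ℕ => ‖a mn.1 mn.2‖ * ‖x‖ ^ mn.1 * ‖y‖ ^ mn.2))
    (hF : ∀ x y : ℂ, ‖x‖ < R₀ → ‖y‖ < R₀ →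
      F x y = ∑' mn : ℕ × ℕ, a mn.1 mn.2 * x ^ mn.1 * y ^ mn.2)
    (k l : ℕ) (hk : 0 < k) (hl : 0 < l)
    (hNewton : ∀ m n : ℕ, l * m + k * n < k * l → a m n = 0)
    (R₁ : ℝ) (hR₁ : 1 < R₁) :
    TendstoUniformlyOn
      (fun (s : ℂ) (z : ℂ) => F (s ^ l * z) (s ^ k * z⁻¹) / s ^ (k * l))
      (fun z : ℂ => ∑ m ∈ Finset.range (k + 1), ∑ n ∈ Finset.range (l + 1),
        (if l * m + k * n = k * l then a m n else 0) * z ^ m * (z⁻¹) ^ n)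
      (nhdsWithin 0 {0}ᶜ)
      {z : ℂ | 1 / R₁ ≤ ‖z‖ ∧ ‖z‖ ≤ R₁} := by
  have hpolydisc := tendstoUniformlyOn_rescaled_newtonPart hR₀ hconv hF hk hl hNewton R₁
  refine (hpolydisc.comp fun z => (z, z⁻¹)).mono fun z ⟨hz₁, hz₂⟩ => ?_
  rw [Set.mem_preimage, mem_closedBall_zero_iff, Prod.norm_def]
  refine max_le hz₂ ?_
  rw [norm_inv]
  exact inv_le_of_inv_le₀ (by linarith) (by rwa [one_div] at hz₁)
end

section
/- Let k, l be positive integers and let (a_{m,n})_{(m,n) ∈ ℕ², l·m + k·n = k·l} be complex numbers with a_{k,0} ≠ 0 and a_{0,l} ≠ 0. Define the polynomial H(z) := Σ_{(m,n) : l·m + k·n = k·l} a_{m,n}·z^{l + m − n} ∈ ℂ[z] (so that H(z) = z^l·G(z, 1/z) for the quasi-homogeneous polynomial G(z,w) = Σ a_{m,n} z^m w^n). Then every root of H in ℂ has multiplicity at most max(k, l). -/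
/-!
Write `g = gcd k l`, `k = g k'`, `l = g l'`. On the segment `l m + k n = k l` one has
`l (l + m - n) = (k + l)(l - n)`, so `l' (l + m - n) = (k' + l')(l - n)` and, as `l'` is coprime to
`k' + l'`, every exponent of `H` is a multiple of `s = k' + l'`. Hence `H(z) = P(z^s)` with
`deg P ≤ (k + l)/s = g` and `P(0) = a_{0,l} ≠ 0`. Since `z ↦ z^s` is unramified away from `0`,
a root `z ≠ 0` of `H` has multiplicity at most that of `z^s` as a root of `P`, hence at most
`g ≤ max k l`; and `0` is not a root.
-/

open Polynomial

section Expand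

variable {K : Type*} [Field K] {s : ℕ}

theorem rootMultiplicity_expand_le (hs : (s : K) ≠ 0) {z : K} (hz : z ≠ 0) (p : K[X]) :
    rootMultiplicity z (expand K s p) ≤ rootMultiplicity (z ^ s) p := by
  classical
  rcases eq_or_ne p 0 with rfl | hp
  · simp
  have hs0 : 0 < s := Nat.pos_of_ne_zero (by rintro rfl; simp at hs)
  set e := rootMultiplicity (z ^ s) p
  obtain ⟨q, hpq, hq⟩ : ∃ q, p = (X - C (z ^ s)) ^ e * q ∧ q.eval (z ^ s) ≠ 0 :=
    ⟨_, (pow_mul_divByMonic_rootMultiplicity_eq p _).symm,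
      eval_divByMonic_pow_rootMultiplicity_ne_zero _ hp⟩
  have hexp : expand K s p = (X ^ s - C (z ^ s)) ^ e * expand K s q := by
    rw [hpq, map_mul, map_pow, map_sub, expand_X, expand_C]
  have hne : expand K s p ≠ 0 := (expand_ne_zero hs0).2 hp
  rw [hexp] at hne ⊢
  rw [← count_roots, roots_mul hne, roots_pow, Multiset.count_add, Multiset.count_nsmul,
    count_roots (expand K s q), rootMultiplicity_eq_zero (by rwa [IsRoot, expand_eval]), add_zero]
  exact mul_le_of_le_one_right (Nat.zero_le e)
    (count_roots_le_one (separable_X_pow_sub_C _ hs (pow_ne_zero s hz)) z)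

theorem rootMultiplicity_expand_le_natDegree (hs : (s : K) ≠ 0) {p : K[X]} (hp : p.eval 0 ≠ 0)
    (z : K) : rootMultiplicity z (expand K s p) ≤ p.natDegree := by
  classical
  rcases eq_or_ne z 0 with rfl | hz
  · have hs0 : s ≠ 0 := by rintro rfl; simp at hs
    rw [rootMultiplicity_eq_zero (by simpa [IsRoot, expand_eval, zero_pow hs0] using hp)]
    exact Nat.zero_le _
  calc rootMultiplicity z (expand K s p) ≤ rootMultiplicity (z ^ s) p :=
        rootMultiplicity_expand_le hs hz p
    _ = p.roots.count (z ^ s) := (count_roots p).symm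
    _ ≤ Multiset.card p.roots := Multiset.count_le_card _ _
    _ ≤ p.natDegree := card_roots' p

end Expand

theorem Nat.add_div_gcd_dvd_of_mul_add_mul_eq {k l m n : ℕ} (hm : m ≤ k) (hn : n ≤ l)
    (h : l * m + k * n = k * l) : (k + l) / k.gcd l ∣ l + m - n := by
  rcases Nat.eq_zero_or_pos (k.gcd l) with hgcd | hgcd
  · obtain ⟨rfl, rfl⟩ := Nat.gcd_eq_zero_iff.1 hgcd
    simp [Nat.le_zero.1 hm, Nat.le_zero.1 hn]
  obtain ⟨g, k', l', hg, hcop, rfl, rfl⟩ := Nat.exists_coprime' hgcd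
  obtain ⟨x, hx⟩ := Nat.exists_eq_add_of_le hn
  rw [Nat.gcd_mul_right, hcop.gcd_eq_one, one_mul, ← add_mul, Nat.mul_div_cancel _ hg,
    show l' * g + m - n = x + m by omega]
  -- `l (l + m - n) = (k + l)(l - n)`, divided by `g`
  have key : l' * (x + m) = (k' + l') * x :=
    Nat.eq_of_mul_eq_mul_left hg (by linear_combination h + k' * g * hx)
  exact (Nat.coprime_add_self_left.2 hcop).dvd_of_dvd_mul_left ⟨x, key⟩

section NewtonSegment

variable {R : Type*}

noncomputable def newtonSegmentPoly [Semiring R] (k l : ℕ) (a : ℕ → ℕ → R) : R[X] :=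
  ∑ m ∈ Finset.range (k + 1), ∑ n ∈ Finset.range (l + 1),
    if l * m + k * n = k * l then C (a m n) * X ^ (l + m - n) else 0

theorem eval_zero_newtonSegmentPoly [Semiring R] (k l : ℕ) (a : ℕ → ℕ → R) :
    (newtonSegmentPoly k l a).eval 0 = a 0 l := by
  simp only [newtonSegmentPoly, eval_finsetSum]
  rw [Finset.sum_eq_single 0 (fun m hm hm0 => Finset.sum_eq_zero fun n hn => ?_) (by simp),
    Finset.sum_eq_single l (fun n hn hnl => ?_) (by simp)]
  · simp
  all_goals
    rw [Finset.mem_range] at hn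
    split_ifs
    · rw [eval_C_mul, eval_X_pow, zero_pow (by omega), mul_zero]
    · exact eval_zero

theorem natDegree_newtonSegmentPoly_le [Semiring R] (k l : ℕ) (a : ℕ → ℕ → R) :
    (newtonSegmentPoly k l a).natDegree ≤ k + l := by
  refine natDegree_sum_le_of_forall_le _ _ fun m hm =>
    natDegree_sum_le_of_forall_le _ _ fun n _ => ?_
  split_ifs
  · rw [Finset.mem_range] at hm
    exact (natDegree_C_mul_X_pow_le _ _).trans (by omega)
  · simp

theorem exists_expand_eq_newtonSegmentPoly [CommSemiring R] (k l : ℕ) (a : ℕ → ℕ → R) :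
    ∃ p : R[X], expand R ((k + l) / k.gcd l) p = newtonSegmentPoly k l a := by
  refine ⟨∑ m ∈ Finset.range (k + 1), ∑ n ∈ Finset.range (l + 1),
    if l * m + k * n = k * l then C (a m n) * X ^ ((l + m - n) / ((k + l) / k.gcd l)) else 0, ?_⟩
  simp only [newtonSegmentPoly, map_sum]
  refine Finset.sum_congr rfl fun m hm => Finset.sum_congr rfl fun n hn => ?_
  split_ifs with h
  · rw [map_mul, expand_C, map_pow, expand_X, ← pow_mul, Nat.mul_div_cancel'
      (Nat.add_div_gcd_dvd_of_mul_add_mul_eq (Nat.lt_succ_iff.1 (Finset.mem_range.1 hm))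
        (Nat.lt_succ_iff.1 (Finset.mem_range.1 hn)) h)]
  · simp

end NewtonSegment

theorem rootMultiplicity_newton_segment_le_general (k l : ℕ) (hk : 0 < k)
    (a : ℕ → ℕ → ℂ) (hal : a 0 l ≠ 0) :
    ∀ z : ℂ,
      Polynomial.rootMultiplicity z
        (∑ m ∈ Finset.range (k + 1), ∑ n ∈ Finset.range (l + 1),
          if l * m + k * n = k * l then C (a m n) * X ^ (l + m - n) else 0)
      ≤ max k l := by
  intro z
  change rootMultiplicity z (newtonSegmentPoly k l a) ≤ max k l
  set s := (k + l) / k.gcd l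
  obtain ⟨p, hp⟩ := exists_expand_eq_newtonSegmentPoly k l a
  have hgcd : k.gcd l ≤ k := Nat.gcd_le_left l hk
  have hs : 0 < s := Nat.div_pos (hgcd.trans (Nat.le_add_right k l)) (Nat.gcd_pos_of_pos_left l hk)
  have hp0 : p.eval 0 ≠ 0 := by
    rwa [← eval_zero_newtonSegmentPoly k l a, ← hp, expand_eval, zero_pow hs.ne'] at hal
  have hdeg : p.natDegree ≤ k.gcd l := by
    refine Nat.le_of_mul_le_mul_right ?_ hs
    rw [← natDegree_expand, hp,
      Nat.mul_div_cancel' (Nat.dvd_add (k.gcd_dvd_left l) (k.gcd_dvd_right l))]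
    exact natDegree_newtonSegmentPoly_le k l a
  calc rootMultiplicity z (newtonSegmentPoly k l a) ≤ p.natDegree :=
        hp ▸ rootMultiplicity_expand_le_natDegree (Nat.cast_ne_zero.2 hs.ne') hp0 z
    _ ≤ max k l := (hdeg.trans hgcd).trans (le_max_left k l)

/-- Let `k, l ≥ 1` and let `(a_{m,n})` be complex numbers indexed by the lattice
points of the segment `l·m + k·n = k·l`, with `a_{k,0} ≠ 0` and `a_{0,l} ≠ 0`.
Then every root of the polynomial `H(z) = Σ_{l·m + k·n = k·l} a_{m,n}·z^{l+m-n}`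
(so that `H(z) = z^l·G(z,1/z)` for `G(z,w) = Σ a_{m,n} z^m w^n`) has multiplicity
at most `max(k,l)`. -/
theorem rootMultiplicity_newton_segment_le (k l : ℕ) (hk : 0 < k) (hl : 0 < l)
    (a : ℕ → ℕ → ℂ) (hak : a k 0 ≠ 0) (hal : a 0 l ≠ 0) :
    ∀ z : ℂ,
      Polynomial.rootMultiplicity z
        (∑ m ∈ Finset.range (k + 1), ∑ n ∈ Finset.range (l + 1),
          if l * m + k * n = k * l then C (a m n) * X ^ (l + m - n) else 0)
      ≤ max k l :=
  rootMultiplicity_newton_segment_le_general k l hk a hal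
end
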